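/- The combinatorial identity ∑_{k=2}^{n-i+1} (1/(k-1)) · C(n-i-1, k-2)/C(n-1, k-1) = 1/i holds for all integers n ≥ 2 and 1 ≤ i ≤ n-1. -/

import Mathlib

/-!
With `a = n - i - 1`, the summand for `k = j + 2` is `1/i` times
`C(a, j) / C(a + i, j) - C(a, j + 1) / C(a + i, j + 1)`, because the binomials on top and bottom both obey
`C(m, j + 1) (j + 1) = C(m, j) (m - j)`, so the sum over `0 ≤ j ≤ a` telescopes to
`(1/i) (C(a, 0) / C(a + i, 0) - C(a, a + 1) / C(a + i, a + 1)) = 1/i`.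
-/

open Finset

theorem cast_choose_succ_mul {R : Type*} [Ring R] {n k : ℕ} (hk : k ≤ n) :
    (n.choose (k + 1) : R) * (k + 1) = n.choose k * (n - k) := by
  rw [← Nat.cast_sub hk]
  exact_mod_cast congrArg (Nat.cast : ℕ → R) (Nat.choose_succ_right_eq n k)

section

variable {K : Type*} [Field K] [CharZero K]

theorem choose_div_choose_sub_choose_succ_div_choose_succ {a i j : ℕ} (hi : 0 < i) (hj : j ≤ a) :
    (a.choose j : K) / (a + i).choose j - a.choose (j + 1) / (a + i).choose (j + 1) =
      i / (j + 1) * (a.choose j / (a + i).choose (j + 1)) := by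
  have hm₀ : ((a + i).choose j : K) ≠ 0 := Nat.cast_ne_zero.2 (Nat.choose_pos (by omega)).ne'
  have hm₁ : ((a + i).choose (j + 1) : K) ≠ 0 :=
    Nat.cast_ne_zero.2 (Nat.choose_pos (by omega)).ne'
  have ha := cast_choose_succ_mul (R := K) hj
  have hm := cast_choose_succ_mul (R := K) (show j ≤ a + i by omega)
  push_cast at hm
  field_simp
  linear_combination (a.choose j : K) * hm - ((a + i).choose j : K) * ha

theorem sum_range_inv_succ_mul_choose_div_choose_succ {a i : ℕ} (hi : 0 < i) :
    ∑ j ∈ range (a + 1), 1 / ((j : K) + 1) * (a.choose j / (a + i).choose (j + 1)) = 1 / i := by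
  have hi' : (i : K) ≠ 0 := Nat.cast_ne_zero.2 hi.ne'
  have htelescope :
      ∑ j ∈ range (a + 1), (i : K) / (j + 1) * (a.choose j / (a + i).choose (j + 1)) = 1 := by
    rw [← sum_congr rfl fun j hj => choose_div_choose_sub_choose_succ_div_choose_succ hi
      (Nat.lt_succ_iff.1 (mem_range.1 hj)), sum_range_sub']
    simp
  calc ∑ j ∈ range (a + 1), 1 / ((j : K) + 1) * (a.choose j / (a + i).choose (j + 1))
      _ = 1 / i * ∑ j ∈ range (a + 1), (i : K) / (j + 1) * (a.choose j / (a + i).choose (j + 1)) := by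
        rw [mul_sum]
        refine sum_congr rfl fun j _ => ?_
        field_simp
      _ = 1 / i := by rw [htelescope, mul_one]

end

theorem fu_combinatorial_identity_general (n i : ℕ) (hi : 1 ≤ i)
    (hin : i ≤ n - 1) :
    ∑ k ∈ Finset.Icc 2 (n - i + 1),
        (1 : ℝ) / ((k : ℝ) - 1) *
          (((n - i - 1).choose (k - 2) : ℝ) / ((n - 1).choose (k - 1) : ℝ)) =
      1 / (i : ℝ) := by
  obtain ⟨a, rfl⟩ : ∃ a, n = a + i + 1 := ⟨n - i - 1, by omega⟩
  rw [show a + i + 1 - i - 1 = a by omega, show a + i + 1 - i + 1 = a + 2 by omega,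
    Nat.add_sub_cancel, ← sum_range_inv_succ_mul_choose_div_choose_succ hi,
    ← Ico_add_one_right_eq_Icc, sum_Ico_eq_sum_range]
  refine sum_congr rfl fun j _ => ?_
  rw [Nat.add_sub_cancel_left, show 2 + j - 1 = j + 1 by omega]
  push_cast
  ring

/-- The combinatorial identity ∑_{k=2}^{n-i+1} (1/(k-1)) C(n-i-1,k-2)/C(n-1,k-1) = 1/i
for all integers n ≥ 2 and 1 ≤ i ≤ n-1. -/
theorem fu_combinatorial_identity (n i : ℕ) (hn : 2 ≤ n) (hi : 1 ≤ i)
    (hin : i ≤ n - 1) :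
    ∑ k ∈ Finset.Icc 2 (n - i + 1),
        (1 : ℝ) / ((k : ℝ) - 1) *
          (((n - i - 1).choose (k - 2) : ℝ) / ((n - 1).choose (k - 1) : ℝ)) =
      1 / (i : ℝ) :=
  fu_combinatorial_identity_general n i hi hin
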